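/- arXiv:2409.18218 — 3 statements merged into one kernel-verified Lean document; each statement's English description precedes it below -/
import Mathlib

section
/- If the pair (π_T, π_S) is in equilibrium — meaning the student cannot strictly improve its return R_S by deviating (in particular by copying the teacher) — then the teacher's return satisfies R_T ≤ 2β·I(π_TS). -/
theorem stmt_2_general {P : Type*} (joint : P → P → P) (C_N C_S I : P → ℝ) (β : ℝ)
    (πT πS : P)
    (hCopy : joint πT πT = πT)
    (hCSle : ∀ π, C_S π ≤ C_N π)
    (hEquil : ∀ σ : P,
      -C_S (joint πT πS) + β * I (joint πT πS) ≥ -C_S (joint πT σ) + β * I (joint πT σ)) :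
    -C_N πT + C_S (joint πT πS) + β * (I πT + I (joint πT πS)) ≤ 2 * β * I (joint πT πS) := by
  have copying_teacher_no_better := hEquil πT
  rw [hCopy] at copying_teacher_no_better
  linarith [hCSle πT]

/-- if the student cannot strictly improve its return by deviating
(in particular by copying the teacher), then `R_T ≤ 2β·I(π_TS)`. -/
theorem stmt_2 {P : Type*} (joint : P → P → P) (C_N C_S I : P → ℝ) (β : ℝ) (hβ : 0 < β)
    (πT πS : P)
    (hCopy : joint πT πT = πT)
    (hCSle : ∀ π, C_S π ≤ C_N π)
    (hEquil : ∀ σ : P,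
      -C_S (joint πT πS) + β * I (joint πT πS) ≥ -C_S (joint πT σ) + β * I (joint πT σ)) :
    -C_N πT + C_S (joint πT πS) + β * (I πT + I (joint πT πS)) ≤ 2 * β * I (joint πT πS) :=
  stmt_2_general joint C_N C_S I β πT πS hCopy hCSle hEquil
end

section
/- Assume there exists a policy π_X with C(π_X, N) = 0, C(π_XS, S) > 0, I(π_X) > I(π_XS) - 1/β, and I(π_XS) > α where α = I(π_TS) + 1/(2β). Then the alternative teacher return R_X = -C(π_X, N) + C(π_XS, S) + β(I(π_X) + I(π_XS)) satisfies R_X > 2β·I(π_XS) - 1 > 2β·I(π_TS) ≥ R_T (the last inequality being the equilibrium lemma). Hence no such π_X can exist at equilibrium, i.e., the student is α-β-optimal. -/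
/-! Multiplying the two gap hypotheses by `β` and `2β` clears the fractions: the deviation gains
`β·I(π_X) > β·I(π_XS) - 1` and the margin `1/(2β)` in `α` becomes exactly the `1` lost there. -/

section

variable {K : Type*} [Field K] [LinearOrder K] [IsStrictOrderedRing K] {a b c : K}

theorem mul_sub_one_lt_mul_of_sub_one_div_lt (hc : 0 < c) (h : b - 1 / c < a) :
    c * b - 1 < c * a :=
  calc c * b - 1 = c * (b - 1 / c) := by rw [mul_sub, mul_one_div_cancel hc.ne']
    _ < c * a := mul_lt_mul_of_pos_left h hc

theorem mul_lt_mul_sub_one_of_add_one_div_lt (hc : 0 < c) (h : b + 1 / c < a) :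
    c * b < c * a - 1 :=
  calc c * b = c * (b + 1 / c) - 1 := by rw [mul_add, mul_one_div_cancel hc.ne', add_sub_cancel_right]
    _ < c * a - 1 := sub_lt_sub_right (mul_lt_mul_of_pos_left h hc) 1

end

/-- the chain of inequalities `R_X > 2β·I(π_XS) - 1 > 2β·I(π_TS) ≥ R_T`
showing no such `π_X` can exist at equilibrium. -/
theorem stmt_3 (cXN cXS iX iXS iTS RT β : ℝ) (hβ : 0 < β)
    (hcXN : cXN = 0) (hcXS : cXS > 0)
    (hiX : iX > iXS - 1 / β)
    (hiXS : iXS > iTS + 1 / (2 * β))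
    (hRT : RT ≤ 2 * β * iTS) :
    (-cXN + cXS + β * (iX + iXS) > 2 * β * iXS - 1) ∧
      (2 * β * iXS - 1 > 2 * β * iTS) ∧ (2 * β * iTS ≥ RT) := by
  have hX : β * iXS - 1 < β * iX := mul_sub_one_lt_mul_of_sub_one_div_lt hβ hiX
  have hTS : 2 * β * iTS < 2 * β * iXS - 1 :=
    mul_lt_mul_sub_one_of_add_one_div_lt (by positivity) hiXS
  refine ⟨?_, hTS, hRT⟩
  subst hcXN
  linarith
end

section
/- Abstract equilibrium theorem: Let Π be a set (of policies) with a pairing operation (·,·) : Π × Π → Π producing joint policies, and functions C_N, C_S : Π → ℝ with 0 ≤ C_S(π) ≤ C_N(π) for all π ∈ Π, and I : Π → ℝ, and let β > 0. Define R_T(τ, σ) = -C_N(τ) + C_S((τ,σ)) + β(I(τ) + I((τ,σ))) and R_S(τ, σ) = -C_S((τ,σ)) + β·I((τ,σ)). Assume (τ,τ) behaves so that C_S((τ,τ)) ≤ C_N(τ) and I((τ,τ)) = I(τ). If (π_T, π_S) is an equilibrium (neither player can strictly improve its own return by unilateral deviation), then π_S is α-β-optimal with α = I((π_T,π_S)) +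 1/(2β): for every τ ∈ Π with I((τ, π_S)) > α and C_N(τ) = 0, it holds that C_S((τ,π_S)) > 0 implies I(τ) < I((τ,π_S)) - 1/β. -/
/-!
Evaluating the student's equilibrium condition at the deviation `σ = π_T` and using
`C_S((π_T,π_T)) ≤ C_N(π_T)`, `I((π_T,π_T)) = I(π_T)`, the teacher's equilibrium return is at most
`2β·I((π_T,π_S))`, hence so is the return of every teacher deviation `τ`. For `τ` with `C_N(τ) = 0`
that return is `C_S((τ,π_S)) + β(I(τ) + I((τ,π_S)))`; since `I((τ,π_S))` exceeds `I((π_T,π_S))`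
by more than `1/(2β)` and `C_S((τ,π_S)) > 0`, this forces `I(τ) < I((τ,π_S)) - 1/β`.
-/

theorem teacher_return_le_two_mul_of_equilibrium {P : Type*} (joint : P → P → P)
    (C_N C_S I : P → ℝ) (β : ℝ)
    (hSelfC : ∀ τ, C_S (joint τ τ) ≤ C_N τ) (hSelfI : ∀ τ, I (joint τ τ) = I τ) (πT πS : P)
    (hEqT : ∀ τ : P,
      -C_N πT + C_S (joint πT πS) + β * (I πT + I (joint πT πS)) ≥
        -C_N τ + C_S (joint τ πS) + β * (I τ + I (joint τ πS)))
    (hEqS : ∀ σ : P,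
      -C_S (joint πT πS) + β * I (joint πT πS) ≥
        -C_S (joint πT σ) + β * I (joint πT σ)) (τ : P) :
    -C_N τ + C_S (joint τ πS) + β * (I τ + I (joint τ πS)) ≤ 2 * β * I (joint πT πS) := by
  have hStudent := hEqS πT
  rw [hSelfI] at hStudent
  linarith [hEqT τ, hSelfC πT]

theorem lt_sub_one_div_of_add_mul_le {β a x y z : ℝ} (hβ : 0 < β) (hx : 0 < x)
    (hle : x + β * (y + z) ≤ 2 * β * a) (hz : a + 1 / (2 * β) < z) : y < z - 1 / β := by
  have hz' : 2 * β * a + 1 < 2 * β * z := by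
    have := mul_lt_mul_of_pos_left hz (by positivity : 0 < 2 * β)
    rwa [mul_add, mul_one_div_cancel (by positivity)] at this
  rw [lt_sub_iff_add_lt, ← mul_lt_mul_iff_right₀ hβ, mul_add, mul_one_div_cancel hβ.ne']
  linarith

theorem stmt_6_general {P : Type*} (joint : P → P → P) (C_N C_S : P → ℝ) (I : P → ℝ)
    (β : ℝ) (hβ : 0 < β)
    (hSelfC : ∀ τ, C_S (joint τ τ) ≤ C_N τ)
    (hSelfI : ∀ τ, I (joint τ τ) = I τ)
    (πT πS : P)
    (hEqT : ∀ τ : P,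
      -C_N πT + C_S (joint πT πS) + β * (I πT + I (joint πT πS)) ≥
        -C_N τ + C_S (joint τ πS) + β * (I τ + I (joint τ πS)))
    (hEqS : ∀ σ : P,
      -C_S (joint πT πS) + β * I (joint πT πS) ≥
        -C_S (joint πT σ) + β * I (joint πT σ)) :
    ∀ τ : P, I (joint τ πS) > I (joint πT πS) + 1 / (2 * β) → C_N τ = 0 →
      C_S (joint τ πS) > 0 → I τ < I (joint τ πS) - 1 / β := by
  intro τ hI hCN hCS
  have hReturn := teacher_return_le_two_mul_of_equilibrium joint C_N C_S I β hSelfC hSelfI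
    πT πS hEqT hEqS τ
  rw [hCN, neg_zero, zero_add] at hReturn
  exact lt_sub_one_div_of_add_mul_le hβ hCS hReturn hI

/-- abstract equilibrium theorem — at equilibrium the student is
`α`-`β`-optimal with `α = I((π_T, π_S)) + 1/(2β)`. -/
theorem stmt_6 {P : Type*} (joint : P → P → P) (C_N C_S : P → ℝ) (I : P → ℝ)
    (β : ℝ) (hβ : 0 < β)
    (hC : ∀ π, 0 ≤ C_S π ∧ C_S π ≤ C_N π)
    (hSelfC : ∀ τ, C_S (joint τ τ) ≤ C_N τ)
    (hSelfI : ∀ τ, I (joint τ τ) = I τ)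
    (πT πS : P)
    (hEqT : ∀ τ : P,
      -C_N πT + C_S (joint πT πS) + β * (I πT + I (joint πT πS)) ≥
        -C_N τ + C_S (joint τ πS) + β * (I τ + I (joint τ πS)))
    (hEqS : ∀ σ : P,
      -C_S (joint πT πS) + β * I (joint πT πS) ≥
        -C_S (joint πT σ) + β * I (joint πT σ)) :
    ∀ τ : P, I (joint τ πS) > I (joint πT πS) + 1 / (2 * β) → C_N τ = 0 →
      C_S (joint τ πS) > 0 → I τ < I (joint τ πS) - 1 / β :=
  stmt_6_general joint C_N C_S I β hβ hSelfC hSelfI πT πS hEqT hEqS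
end
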